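/- arXiv:2407.06131 — 3 statements merged into one kernel-verified Lean document; each statement's English description precedes it below -/
import Mathlib

section
/- Let p₀, p₁, p₂ be three affinely independent points in the plane and let P be a finite set of m ≥ 1 points in the open triangle with vertices p₀, p₁, p₂ such that P ∪ {p₀,p₁,p₂} is in general position (no three collinear). Let w₀, w₁, w₂ be integers with 0 ≤ wᵢ < m and w₀+w₁+w₂ > 2m-3. Then there exist at least w₀+w₁+w₂-2m+3 points q ∈ P such that for each i ∈ {0,1,2}, the open triangle with vertices pᵢ, q, p_{i+1} (indices mod 3) contains at most w_{i+2} points of P. -/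
/-!
For a side `pᵢ pᵢ₊₁`, let `x ≺ q` mean that `x` lies in the open triangle `pᵢ q pᵢ₊₁`. This is a
strict partial order: that triangle then contains the whole triangle `pᵢ x pᵢ₊₁`, and no point lies
in an open triangle of which it is a vertex. If `q` is `≺`-minimal among the points of `P` with more
than `w` predecessors, its predecessors all have fewer predecessors than `q`, so they are not among
those points; hence there are at most `m - w - 1` of them. Discarding them for each of the three
sides leaves at least `m - ∑ᵢ (m - wᵢ - 1) = w₀ + w₁ + w₂ - 2m + 3` points.
-/

open scoped Classical
open Finset

section StrictOrder

variable {α : Type*} {r : α → α → Prop}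

theorem Finset.card_filter_rel_lt_of_rel (P : Finset α)
    (htrans : ∀ x y z, r x y → r y z → r x z) (hirr : ∀ x, ¬ r x x)
    {x q : α} (hx : x ∈ P) (hxq : r x q) :
    #{y ∈ P | r y x} < #{y ∈ P | r y q} := by
  refine card_lt_card ⟨fun y hy => ?_, fun hsub => ?_⟩
  · obtain ⟨hyP, hyx⟩ := mem_filter.1 hy
    exact mem_filter.2 ⟨hyP, htrans y x q hyx hxq⟩
  · exact hirr x (mem_filter.1 (hsub (mem_filter.2 ⟨hx, hxq⟩))).2

theorem Finset.card_filter_lt_card_filter_rel_le (P : Finset α)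
    (htrans : ∀ x y z, r x y → r y z → r x z) (hirr : ∀ x, ¬ r x x)
    {w : ℤ} (hw : w < #P) :
    (#{q ∈ P | w < #{x ∈ P | r x q}} : ℤ) ≤ #P - w - 1 := by
  set bad := {q ∈ P | w < #{x ∈ P | r x q}}
  rcases bad.eq_empty_or_nonempty with hempty | hne
  · rw [hempty, card_empty]
    omega
  obtain ⟨q, hq, hmin⟩ := exists_min_image bad (fun q => #{x ∈ P | r x q}) hne
  have hdisj : Disjoint {x ∈ P | r x q} bad := by
    refine disjoint_left.2 fun x hx hxbad => ?_
    obtain ⟨hxP, hxq⟩ := mem_filter.1 hx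
    exact (card_filter_rel_lt_of_rel P htrans hirr hxP hxq).not_ge (hmin x hxbad)
  have hcard : #{x ∈ P | r x q} + #bad ≤ #P := by
    rw [← card_union_of_disjoint hdisj]
    exact card_le_card (union_subset (filter_subset _ _) (filter_subset _ _))
  have hq : w < #{x ∈ P | r x q} := (mem_filter.1 hq).2
  omega

end StrictOrder

section Triangle

variable {E : Type*} [NormedAddCommGroup E] [NormedSpace ℝ E]

theorem Collinear.interior_convexHull_eq_empty [FiniteDimensional ℝ E]
    (hE : 1 < Module.finrank ℝ E) {s : Set E} (hs : Collinear ℝ s) :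
    interior (convexHull ℝ s) = ∅ := by
  by_contra h
  rw [← ne_eq, ← Set.nonempty_iff_ne_empty,
    interior_convexHull_nonempty_iff_affineSpan_eq_top] at h
  rw [Collinear, ← direction_affineSpan, h, AffineSubspace.direction_top, rank_top,
    ← Module.finrank_eq_rank] at hs
  exact hE.not_ge (by exact_mod_cast hs)

/-- If `x` is interior, the hull also contains a point `x + ε (x - a)` beyond `x` as seen from
`a ∈ s`; writing it as a combination of `x` and a point `z ∈ convexHull s` puts `x` on `[a, z]`. -/
theorem mem_convexHull_of_mem_interior_convexHull_insert {x : E} {s : Set E}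
    (hs : s.Nonempty) (hx : x ∈ interior (convexHull ℝ (insert x s))) :
    x ∈ convexHull ℝ s := by
  obtain ⟨a, ha⟩ := hs
  have hline : Filter.Tendsto (fun ε : ℝ => x + ε • (x - a)) (nhds 0) (nhds x) :=
    (continuous_const.add (continuous_id.smul continuous_const)).tendsto' _ _ (by simp)
  obtain ⟨ε, hε, hu⟩ := (hline.eventually (mem_interior_iff_mem_nhds.1 hx)).exists_gt
  replace hu : x + ε • (x - a) ∈ convexJoin ℝ {x} (convexHull ℝ s) := by
    rwa [← convexHull_insert ⟨a, ha⟩]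
  obtain ⟨y, hy, z, hz, r, t, -, ht, hrt, hu⟩ := mem_convexJoin.1 hu
  rw [Set.mem_singleton_iff.1 hy] at hu
  have key : ε • a + t • z = (ε + t) • x := by
    linear_combination (norm := module) hu - hrt • x
  have hc : 0 < ε + t := by positivity
  convert convex_iff_div.1 (convex_convexHull ℝ s) (subset_convexHull ℝ s ha) hz hε.le ht hc
    using 1
  rw [div_eq_inv_mul, div_eq_inv_mul, mul_smul, mul_smul, ← smul_add, key,
    inv_smul_smul₀ hc.ne']

theorem notMem_interior_convexHull_triple [FiniteDimensional ℝ E]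
    (hE : 1 < Module.finrank ℝ E) (a x b : E) :
    x ∉ interior (convexHull ℝ {a, x, b}) := by
  intro hx
  rw [Set.insert_comm] at hx
  have hseg := mem_convexHull_of_mem_interior_convexHull_insert (by simp) hx
  have hcol : Collinear ℝ {x, a, b} :=
    collinear_insert_of_mem_affineSpan_pair (convexHull_subset_affineSpan _ hseg)
  rw [hcol.interior_convexHull_eq_empty hE] at hx
  exact hx

theorem interior_convexHull_triple_subset {a b q q' : E}
    (hq' : q' ∈ convexHull ℝ {a, q, b}) :
    interior (convexHull ℝ {a, q', b}) ⊆ interior (convexHull ℝ {a, q, b}) := by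
  refine interior_mono (convexHull_min ?_ (convex_convexHull ℝ _))
  refine Set.insert_subset (subset_convexHull ℝ _ (by simp)) (Set.insert_subset hq' ?_)
  exact Set.singleton_subset_iff.2 (subset_convexHull ℝ _ (by simp))

end Triangle

theorem stmt_8_general (p : Fin 3 → ℝ × ℝ)
    (P : Finset (ℝ × ℝ)) (m : ℕ) (hPm : P.card = m)
    (w : Fin 3 → ℤ) (hw1 : ∀ i, w i < m) :
    ∃ Q ⊆ P, w 0 + w 1 + w 2 - 2 * m + 3 ≤ (Q.card : ℤ) ∧
      ∀ q ∈ Q, ∀ i : Fin 3,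
        ((P.filter (fun x =>
            x ∈ interior (convexHull ℝ ({p i, q, p (i + 1)} : Set (ℝ × ℝ))))).card : ℤ)
          ≤ w (i + 2) := by
  have hdim : 1 < Module.finrank ℝ (ℝ × ℝ) := by simp
  set bad : Fin 3 → Finset (ℝ × ℝ) := fun i =>
    {q ∈ P | w (i + 2) < #{x ∈ P | x ∈ interior (convexHull ℝ {p i, q, p (i + 1)})}}
  have hbad (i : Fin 3) : (#(bad i) : ℤ) ≤ m - w (i + 2) - 1 := by
    subst hPm
    exact card_filter_lt_card_filter_rel_le P
      (r := fun x q => x ∈ interior (convexHull ℝ {p i, q, p (i + 1)}))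
      (fun x y z hxy hyz => interior_convexHull_triple_subset (interior_subset hyz) hxy)
      (fun x => notMem_interior_convexHull_triple hdim _ x _) (hw1 _)
  refine ⟨P \ univ.biUnion bad, sdiff_subset, ?_, fun q hq i => ?_⟩
  · have hcover : #P ≤ #(P \ univ.biUnion bad) + ∑ i, #(bad i) :=
      card_le_card_sdiff_add_card.trans (Nat.add_le_add_left card_biUnion_le _)
    have hsum : ∑ i, (#(bad i) : ℤ) ≤ ∑ i, ((m : ℤ) - w (i + 2) - 1) :=
      sum_le_sum fun i _ => hbad i
    simp only [Fin.sum_univ_three, Fin.reduceAdd] at hcover hsum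
    omega
  · obtain ⟨hqP, hqbad⟩ := mem_sdiff.1 hq
    have : q ∉ bad i := fun h => hqbad (mem_biUnion.2 ⟨i, mem_univ _, h⟩)
    simpa [bad, hqP] using this

theorem stmt_8 (p : Fin 3 → ℝ × ℝ) (hp : AffineIndependent ℝ p)
    (P : Finset (ℝ × ℝ)) (m : ℕ) (hm : 1 ≤ m) (hPm : P.card = m)
    (hPin : ∀ q ∈ P, q ∈ interior (convexHull ℝ ({p 0, p 1, p 2} : Set (ℝ × ℝ))))
    (hgen : ∀ x ∈ (↑P ∪ {p 0, p 1, p 2} : Set (ℝ × ℝ)),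
            ∀ y ∈ (↑P ∪ {p 0, p 1, p 2} : Set (ℝ × ℝ)),
            ∀ z ∈ (↑P ∪ {p 0, p 1, p 2} : Set (ℝ × ℝ)),
            x ≠ y → x ≠ z → y ≠ z → ¬ Collinear ℝ ({x, y, z} : Set (ℝ × ℝ)))
    (w : Fin 3 → ℤ) (hw0 : ∀ i, 0 ≤ w i) (hw1 : ∀ i, w i < m)
    (hsum : w 0 + w 1 + w 2 > 2 * m - 3) :
    ∃ Q ⊆ P, w 0 + w 1 + w 2 - 2 * m + 3 ≤ (Q.card : ℤ) ∧
      ∀ q ∈ Q, ∀ i : Fin 3,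
        ((P.filter (fun x =>
            x ∈ interior (convexHull ℝ ({p i, q, p (i + 1)} : Set (ℝ × ℝ))))).card : ℤ)
          ≤ w (i + 2) :=
  stmt_8_general p P m hPm w hw1
end

section
/- Let Δ be a triangle in the plane (three affinely independent vertices) and let P be a finite set of m ≥ 1 points in the open interior of Δ. Then there exists a point q ∈ P such that each of the three triangles formed by q and two vertices of Δ contains at most ⌈(2m-2)/3⌉ points of P in its open interior. -/
open scoped Classical

theorem stmt_9 (p : Fin 3 → ℝ × ℝ) (hp : AffineIndependent ℝ p)
    (P : Finset (ℝ × ℝ)) (m : ℕ) (hm : 1 ≤ m) (hPm : P.card = m)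
    (hPin : ∀ q ∈ P, q ∈ interior (convexHull ℝ ({p 0, p 1, p 2} : Set (ℝ × ℝ)))) :
    ∃ q ∈ P, ∀ i : Fin 3,
      ((P.filter (fun x =>
          x ∈ interior (convexHull ℝ ({p i, q, p (i + 1)} : Set (ℝ × ℝ))))).card : ℤ)
        ≤ ⌈(2 * (m : ℚ) - 2) / 3⌉ := by
  have hspan : affineSpan ℝ (Set.range p) = ⊤ := by
    rw [hp.affineSpan_eq_top_iff_card_eq_finrank_add_one]
    simp
  let b : AffineBasis (Fin 3) ℝ (ℝ × ℝ) := ⟨p, hp, hspan⟩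
  have hbp : ⇑b = p := rfl
  have hrange : ({p 0, p 1, p 2} : Set (ℝ × ℝ)) = Set.range ⇑b := by
    rw [hbp]
    ext x
    constructor
    · rintro (rfl | rfl | rfl) <;> exact ⟨_, rfl⟩
    · rintro ⟨i, rfl⟩
      fin_cases i <;> simp
  have hpos : ∀ q ∈ P, ∀ j : Fin 3, 0 < b.coord j q := by
    intro q hq j
    have h := hPin q hq
    rw [hrange, b.interior_convexHull] at h
    exact h j
  set B : ℤ := ⌈(2 * (m : ℚ) - 2) / 3⌉ with hBdef
  have hB3 : 2 * (m : ℤ) - 2 ≤ 3 * B := by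
    have h := Int.le_ceil ((2 * (m : ℚ) - 2) / 3)
    rw [div_le_iff₀ (by norm_num : (0:ℚ) < 3)] at h
    have h2 : (2 * (m:ℚ) - 2) ≤ 3 * ((B : ℤ) : ℚ) := by linarith
    exact_mod_cast h2
  have key : ∀ q ∈ P, ∀ i : Fin 3, ∀ x,
      x ∈ interior (convexHull ℝ ({p i, q, p (i + 1)} : Set (ℝ × ℝ))) →
      b.coord (i + 2) x < b.coord (i + 2) q := by
    intro q hq i x hx
    have hne1 : i + 2 ≠ i := by
      intro h
      have h2 : (2 : Fin 3) = 0 := by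
        have := h.trans (add_zero i).symm
        exact add_left_cancel this
      exact absurd h2 (by decide)
    have hne2 : i + 2 ≠ i + 1 := by
      intro h
      exact absurd (add_left_cancel h) (by decide : ¬ (2 : Fin 3) = 1)
    have hcq : 0 < b.coord (i + 2) q := hpos q hq _
    have hsub : convexHull ℝ ({p i, q, p (i + 1)} : Set (ℝ × ℝ)) ⊆
        b.coord (i + 2) ⁻¹' Set.Iic (b.coord (i + 2) q) := by
      apply convexHull_min
      · intro y hy
        simp only [Set.mem_insert_iff, Set.mem_singleton_iff] at hy
        rcases hy with rfl | rfl | rfl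
        · have h0 : b.coord (i + 2) (p i) = 0 := b.coord_apply_ne hne1
          simp only [Set.mem_preimage, Set.mem_Iic, h0]
          linarith
        · simp [Set.mem_preimage]
        · have h0 : b.coord (i + 2) (p (i + 1)) = 0 := b.coord_apply_ne hne2
          simp only [Set.mem_preimage, Set.mem_Iic, h0]
          linarith
      · exact (convex_Iic _).affine_preimage _
    have h2 := interior_mono hsub hx
    rw [← IsOpenMap.preimage_interior_eq_interior_preimage
          (isOpenMap_barycentric_coord b (i + 2)) (continuous_barycentric_coord b (i + 2)),
        interior_Iic] at h2
    exact h2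
  -- counting argument
  let Bad : Fin 3 → Finset (ℝ × ℝ) := fun j =>
    P.filter (fun q => B < ((P.filter (fun x => b.coord j x < b.coord j q)).card : ℤ))
  have hBadcard : ∀ j, 3 * ((Bad j).card : ℤ) ≤ (m : ℤ) - 1 := by
    intro j
    rcases (Bad j).eq_empty_or_nonempty with h | h
    · simp only [h, Finset.card_empty, Nat.cast_zero, mul_zero]
      have : (1 : ℤ) ≤ m := by exact_mod_cast hm
      linarith
    · obtain ⟨q0, hq0, hq0min⟩ := (Bad j).exists_min_image (fun x => b.coord j x) h
      have hq0' : B < ((P.filter (fun x => b.coord j x < b.coord j q0)).card : ℤ) :=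
        (Finset.mem_filter.mp hq0).2
      set F := P.filter (fun x => b.coord j x < b.coord j q0) with hF
      have hdisj : Disjoint F (Bad j) := by
        rw [Finset.disjoint_left]
        intro x hxF hxB
        have h1 : b.coord j x < b.coord j q0 := (Finset.mem_filter.mp hxF).2
        have h2 := hq0min x hxB
        linarith
      have hsub : F ∪ Bad j ⊆ P :=
        Finset.union_subset (Finset.filter_subset _ _) (Finset.filter_subset _ _)
      have hcard := Finset.card_le_card hsub
      rw [Finset.card_union_of_disjoint hdisj, hPm] at hcard
      have hcard' : (F.card : ℤ) + ((Bad j).card : ℤ) ≤ (m : ℤ) := by exact_mod_cast hcard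
      linarith
  have hexists : ∃ q ∈ P, ∀ j, q ∉ Bad j := by
    by_contra hcon
    push_neg at hcon
    have hPsub : P ⊆ Bad 0 ∪ Bad 1 ∪ Bad 2 := by
      intro q hq
      obtain ⟨j, hj⟩ := hcon q hq
      have h3 : ∀ k : Fin 3, k = 0 ∨ k = 1 ∨ k = 2 := by decide
      rcases h3 j with rfl | rfl | rfl
      · exact Finset.mem_union_left _ (Finset.mem_union_left _ hj)
      · exact Finset.mem_union_left _ (Finset.mem_union_right _ hj)
      · exact Finset.mem_union_right _ hj
    have h1 := Finset.card_le_card hPsub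
    have h2 : (Bad 0 ∪ Bad 1 ∪ Bad 2).card ≤ (Bad 0).card + (Bad 1).card + (Bad 2).card :=
      le_trans (Finset.card_union_le _ _)
        (by have := Finset.card_union_le (Bad 0) (Bad 1); omega)
    have h3 : (m : ℤ) ≤ ((Bad 0).card : ℤ) + (Bad 1).card + (Bad 2).card := by
      rw [← hPm]; exact_mod_cast le_trans h1 h2
    have b0 := hBadcard 0
    have b1 := hBadcard 1
    have b2 := hBadcard 2
    have hm' : (1 : ℤ) ≤ m := by exact_mod_cast hm
    linarith
  obtain ⟨q, hqP, hqgood⟩ := hexists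
  refine ⟨q, hqP, fun i => ?_⟩
  have hnot := hqgood (i + 2)
  simp only [Bad, Finset.mem_filter, not_and, not_lt] at hnot
  have hle : ((P.filter (fun x => b.coord (i + 2) x < b.coord (i + 2) q)).card : ℤ) ≤ B :=
    hnot hqP
  have hsub : P.filter (fun x =>
      x ∈ interior (convexHull ℝ ({p i, q, p (i + 1)} : Set (ℝ × ℝ)))) ⊆
      P.filter (fun x => b.coord (i + 2) x < b.coord (i + 2) q) := by
    intro x hx
    rw [Finset.mem_filter] at hx ⊢
    exact ⟨hx.1, key q hqP i x hx.2⟩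
  have := Finset.card_le_card hsub
  calc ((P.filter (fun x =>
      x ∈ interior (convexHull ℝ ({p i, q, p (i + 1)} : Set (ℝ × ℝ))))).card : ℤ)
      ≤ ((P.filter (fun x => b.coord (i + 2) x < b.coord (i + 2) q)).card : ℤ) := by
        exact_mod_cast this
    _ ≤ B := hle
end

section
/- Let P be a finite set of points in general position in the plane and p ∈ P with depth d(p) ≥ 1 (depth = minimum number of points to delete so that p is on the convex hull boundary of the rest). Then there exists a set M of d(p) segments with pairwise disjoint endpoint sets drawn from P, such that the union of the segments of M is a connected subset of the plane. -/
/-!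
Since `p` has depth at least `d`, every open half-plane bounded by a line through `p` contains at
least `d` points of `P`. Let `b` be a point of `P` farthest from `p`, and `L`, `R` the points
strictly left and right of the line `pb`. For `u ∈ L`, the open half-plane beyond the line `pu`
contains, besides `b` and the points of `L` angularly beyond `u`, only points `v ∈ R`; as `b` is
farthest from `p`, each such segment `uv` crosses the segment `pb`. Counting shows that the
`d - 1` angularly last points of `L` satisfy Hall's condition for this relation, and the resulting
`d - 1` segments together with `pb` form a connected matching.
-/

open Finset

namespace PlaneMatching

def cross (z w : ℝ × ℝ) : ℝ := z.1 * w.2 - z.2 * w.1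

def dot (z w : ℝ × ℝ) : ℝ := z.1 * w.1 + z.2 * w.2

lemma cross_self (z : ℝ × ℝ) : cross z z = 0 := by
  unfold cross; ring

lemma cross_zero_right (z : ℝ × ℝ) : cross z 0 = 0 := by
  simp [cross]

lemma cross_smul_right (z w : ℝ × ℝ) (c : ℝ) : cross z (c • w) = c * cross z w := by
  simp only [cross, Prod.smul_fst, Prod.smul_snd, smul_eq_mul]; ring

lemma cross_swap (z w : ℝ × ℝ) : cross w z = -cross z w := by
  unfold cross; ring

lemma dot_self_pos {z : ℝ × ℝ} (hz : z ≠ 0) : 0 < dot z z := by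
  have : z.1 ≠ 0 ∨ z.2 ≠ 0 := by
    contrapose! hz
    exact Prod.ext hz.1 hz.2
  unfold dot
  rcases this with h | h
  · nlinarith [mul_self_pos.2 h, mul_self_nonneg z.2]
  · nlinarith [mul_self_pos.2 h, mul_self_nonneg z.1]

lemma dot_le_dot_self_of_dot_self_le {u b : ℝ × ℝ} (h : dot u u ≤ dot b b) :
    dot u b ≤ dot b b := by
  unfold dot at *
  nlinarith [sq_nonneg (u.1 - b.1), sq_nonneg (u.2 - b.2)]

lemma eq_smul_of_cross_eq_zero {z w : ℝ × ℝ} (hz : z ≠ 0) (h : cross z w = 0) :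
    w = (dot w z / dot z z) • z := by
  have hd := (dot_self_pos hz).ne'
  unfold cross at h
  ext <;> simp only [Prod.smul_fst, Prod.smul_snd, smul_eq_mul] <;> field_simp <;> unfold dot
  · linear_combination (-z.2) * h
  · linear_combination z.1 * h

lemma collinear_of_cross_sub_eq_zero {p x y : ℝ × ℝ} (hx : x ≠ p)
    (h : cross (x - p) (y - p) = 0) : Collinear ℝ ({p, x, y} : Set (ℝ × ℝ)) := by
  rw [collinear_iff_of_mem (Set.mem_insert p _)]
  refine ⟨x - p, ?_⟩
  simp only [Set.mem_insert_iff, Set.mem_singleton_iff, forall_eq_or_imp, forall_eq]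
  refine ⟨⟨0, by simp⟩, ⟨1, by simp⟩, ⟨dot (y - p) (x - p) / dot (x - p) (x - p), ?_⟩⟩
  rw [vadd_eq_add, ← eq_smul_of_cross_eq_zero (sub_ne_zero.2 hx) h]
  abel

lemma cross_sub_ne_zero {P : Finset (ℝ × ℝ)} {p x y : ℝ × ℝ}
    (hgen : ∀ x ∈ P, ∀ y ∈ P, ∀ z ∈ P,
      x ≠ y → x ≠ z → y ≠ z → ¬ Collinear ℝ ({x, y, z} : Set (ℝ × ℝ)))
    (hp : p ∈ P) (hx : x ∈ P) (hy : y ∈ P) (hxp : x ≠ p) (hyp : y ≠ p) (hxy : x ≠ y) :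
    cross (x - p) (y - p) ≠ 0 := fun h =>
  hgen p hp x hx y hy hxp.symm hyp.symm hxy (collinear_of_cross_sub_eq_zero hxp h)

lemma segment_inter_segment_zero_nonempty {u v b : ℝ × ℝ}
    (hu : 0 < cross b u) (hv : cross b v < 0) (huv : 0 < cross v u)
    (hub : dot u u ≤ dot b b) (hvb : dot v v ≤ dot b b) :
    (segment ℝ u v ∩ segment ℝ 0 b).Nonempty := by
  have hb : b ≠ 0 := by
    rintro rfl
    simp [cross] at hu
  set t := cross b u / (cross b u - cross b v) with ht
  have ht0 : 0 < t := div_pos hu (by linarith)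
  have ht1 : t < 1 := (div_lt_one (by linarith)).2 (by linarith)
  set w := u + t • (v - u) with hw
  have hcross_w (z : ℝ × ℝ) : cross z w = (1 - t) * cross z u + t * cross z v := by
    simp only [hw, cross, Prod.fst_add, Prod.snd_add, Prod.smul_fst, Prod.smul_snd,
      Prod.fst_sub, Prod.snd_sub, smul_eq_mul]
    ring
  have hdot_w : dot w b = (1 - t) * dot u b + t * dot v b := by
    simp only [hw, dot, Prod.fst_add, Prod.snd_add, Prod.smul_fst, Prod.smul_snd,
      Prod.fst_sub, Prod.snd_sub, smul_eq_mul]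
    ring
  have hwb : w = (dot w b / dot b b) • b := by
    refine eq_smul_of_cross_eq_zero hb ?_
    have : cross b u - cross b v ≠ 0 := by linarith
    rw [hcross_w, ht]
    field_simp
    ring
  set l := dot w b / dot b b
  -- `w` lies on the ray `0b` because it lies on the same side of the line `0v` as `u` and `b`
  have hl0 : 0 < l := by
    have hvb' : 0 < cross v b := by rw [cross_swap]; linarith
    have h := hcross_w v
    rw [cross_self, mul_zero, add_zero, hwb, cross_smul_right] at h
    have : 0 < l * cross v b := h ▸ mul_pos (by linarith) huv
    exact pos_of_mul_pos_left this hvb'.le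
  have hl1 : l ≤ 1 := by
    rw [div_le_one (dot_self_pos hb), hdot_w]
    nlinarith [dot_le_dot_self_of_dot_self_le hub, dot_le_dot_self_of_dot_self_le hvb]
  refine ⟨w, ?_, ?_⟩
  · rw [segment_eq_image']
    exact ⟨t, ⟨ht0.le, ht1.le⟩, rfl⟩
  · rw [hwb, segment_eq_image']
    exact ⟨l, ⟨hl0.le, hl1⟩, by simp⟩

lemma segment_inter_segment_nonempty {p u v b : ℝ × ℝ}
    (hu : 0 < cross (b - p) (u - p)) (hv : cross (b - p) (v - p) < 0)
    (huv : 0 < cross (v - p) (u - p))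
    (hub : dot (u - p) (u - p) ≤ dot (b - p) (b - p))
    (hvb : dot (v - p) (v - p) ≤ dot (b - p) (b - p)) :
    (segment ℝ u v ∩ segment ℝ p b).Nonempty := by
  obtain ⟨w, hwuv, hwb⟩ := segment_inter_segment_zero_nonempty hu hv huv hub hvb
  refine ⟨p + w, ?_, ?_⟩
  · simpa using (mem_segment_translate ℝ p).2 hwuv
  · simpa using (mem_segment_translate ℝ p).2 hwb

noncomputable def cotAngle (b u : ℝ × ℝ) : ℝ := dot u b / cross b u

lemma cotAngle_lt_cotAngle_iff {b u w : ℝ × ℝ} (hb : b ≠ 0) (hu : 0 < cross b u)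
    (hw : 0 < cross b w) : cotAngle b u < cotAngle b w ↔ 0 < cross w u := by
  have key : dot w b * cross b u - dot u b * cross b w = dot b b * cross w u := by
    unfold dot cross; ring
  rw [cotAngle, cotAngle, div_lt_div_iff₀ hu hw, ← sub_pos, key]
  exact mul_pos_iff_of_pos_left (dot_self_pos hb)

lemma notMem_interior_of_subset_le {E : Type*} [NormedAddCommGroup E] [NormedSpace ℝ E]
    {C : Set E} {x : E} (ℓ : E →L[ℝ] ℝ) (hℓ : ℓ ≠ 0) (hC : C ⊆ {y | ℓ y ≤ ℓ x}) :
    x ∉ interior C := fun hx =>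
  hℓ <| IsLocalMax.hasFDerivAt_eq_zero
    (Filter.mem_of_superset (mem_interior_iff_mem_nhds.1 hx) hC) ℓ.hasFDerivAt

def crossCLM (z : ℝ × ℝ) : ℝ × ℝ →L[ℝ] ℝ :=
  z.1 • ContinuousLinearMap.snd ℝ ℝ ℝ - z.2 • ContinuousLinearMap.fst ℝ ℝ ℝ

@[simp] lemma crossCLM_apply (z w : ℝ × ℝ) : crossCLM z w = cross z w := by
  simp [crossCLM, cross]

lemma crossCLM_ne_zero {z : ℝ × ℝ} (hz : z ≠ 0) : crossCLM z ≠ 0 := by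
  intro h
  have := DFunLike.congr_fun h (-z.2, z.1)
  simp only [crossCLM_apply, zero_apply, cross] at this
  exact (dot_self_pos hz).ne' (by unfold dot; linarith)

/-- Deleting the points of an open half-plane bounded by a line through `p` leaves `p` on the
boundary of the convex hull. -/
lemma le_card_filter_cross_pos {P : Finset (ℝ × ℝ)} {p w : ℝ × ℝ} {d : ℕ} (hp : p ∈ P)
    (hd : ∀ S ⊆ P.erase p, p ∈ frontier (convexHull ℝ (↑(P \ S) : Set (ℝ × ℝ))) → d ≤ S.card)
    (hw : w ≠ 0) : d ≤ #{q ∈ P | 0 < cross w (q - p)} := by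
  have hpS : p ∉ {q ∈ P | 0 < cross w (q - p)} := by simp [cross]
  refine hd _ (fun q hq => mem_erase.2 ⟨by rintro rfl; exact hpS hq, (mem_filter.1 hq).1⟩)
    ⟨subset_closure (subset_convexHull ℝ _ (by simp [hp, cross_zero_right])),
      notMem_interior_of_subset_le (crossCLM w) (crossCLM_ne_zero hw) ?_⟩
  refine convexHull_min ?_ (convex_halfSpace_le (crossCLM w).toLinearMap.isLinear _)
  intro q hq
  simp only [coe_sdiff, Set.mem_sdiff, mem_coe, mem_filter, not_and, not_lt] at hq
  have := hq.2 hq.1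
  simp only [Set.mem_ofPred_eq, crossCLM_apply]
  unfold cross at this ⊢
  simp only [Prod.fst_sub, Prod.snd_sub] at this
  linarith

lemma le_card_erase {P : Finset (ℝ × ℝ)} {p : ℝ × ℝ} {d : ℕ} (hp : p ∈ P)
    (hd : ∀ S ⊆ P.erase p, p ∈ frontier (convexHull ℝ (↑(P \ S) : Set (ℝ × ℝ))) → d ≤ S.card) :
    d ≤ #(P.erase p) :=
  hd _ Subset.rfl (by simp [sdiff_erase_self hp, frontier, interior_singleton])

lemma exists_subset_card_eq_forall_lt_mem {α β : Type*} [LinearOrder β] (κ : α → β)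
    {S : Finset α} {k : ℕ} (hk : k ≤ #S) :
    ∃ T ⊆ S, #T = k ∧ ∀ u ∈ T, ∀ w ∈ S, κ u < κ w → w ∈ T := by
  classical
  induction k with
  | zero => exact ⟨∅, empty_subset _, rfl, by simp⟩
  | succ k ih =>
    obtain ⟨T, hTS, hT, hup⟩ := ih (by omega)
    obtain ⟨m, hm, hmax⟩ := (S \ T).exists_max_image κ
      (by rw [← card_pos, card_sdiff_of_subset hTS]; omega)
    obtain ⟨hmS, hmT⟩ := mem_sdiff.1 hm
    refine ⟨insert m T, insert_subset hmS hTS, by rw [card_insert_of_notMem hmT, hT], ?_⟩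
    rintro u hu w hw hlt
    rcases mem_insert.1 hu with rfl | huT
    · by_contra hwT
      exact (hmax w (mem_sdiff.2 ⟨hw, fun h => hwT (mem_insert_of_mem h)⟩)).not_gt hlt
    · exact mem_insert_of_mem (hup u huT w hw hlt)

/-- Hall's condition holds on the last `k` elements `T` of `L`: for `s ⊆ T`, the successors of the
last element of `s` lie in `T \ s`, so that element alone has `#s` neighbours. -/
lemma exists_subset_injOn_of_le_card_add_card {α β γ : Type*} [LinearOrder γ] [DecidableEq β]
    [Nonempty β] (κ : α → γ) (N : α → Finset β) {L : Finset α} {k : ℕ} (hk : k ≤ #L)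
    (hN : ∀ u ∈ L, k ≤ #{w ∈ L | κ u < κ w} + #(N u)) :
    ∃ T ⊆ L, #T = k ∧ ∃ f : α → β, Set.InjOn f T ∧ ∀ u ∈ T, f u ∈ N u := by
  obtain ⟨T, hTL, hT, hup⟩ := exists_subset_card_eq_forall_lt_mem κ hk
  have hall (s : Finset T) : #s ≤ #(s.biUnion fun u => N u) := by
    rcases s.eq_empty_or_nonempty with rfl | hs
    · simp
    obtain ⟨u, hu, hmax⟩ := s.exists_max_image (fun u => κ u) hs
    have hNu := hN u (hTL u.2)
    classical
    have hsucc : {w ∈ L | κ u < κ w} ⊆ T \ s.map (Function.Embedding.subtype _) := by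
      intro w hw
      obtain ⟨hwL, hlt⟩ := mem_filter.1 hw
      refine mem_sdiff.2 ⟨hup u u.2 w hwL hlt, fun hws => ?_⟩
      obtain ⟨w', hw's, rfl⟩ := mem_map.1 hws
      exact (hmax w' hw's).not_gt hlt
    have hsT : s.map (Function.Embedding.subtype _) ⊆ T := fun x hx => by
      obtain ⟨x', -, rfl⟩ := mem_map.1 hx
      exact x'.2
    have hsucc_card := card_le_card hsucc
    have hs_card := card_le_card hsT
    rw [card_sdiff_of_subset hsT, card_map] at hsucc_card
    rw [card_map] at hs_card
    calc #s ≤ #(N u) := by omega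
      _ ≤ _ := card_le_card (subset_biUnion_of_mem (fun u : T => N u) hu)
  obtain ⟨g, hg, hgN⟩ := (all_card_le_biUnion_card_iff_exists_injective _).1 hall
  classical
  refine ⟨T, hTL, hT, fun x => if hx : x ∈ T then g ⟨x, hx⟩ else Classical.arbitrary β,
    fun x hx y hy hxy => ?_, fun u hu => by simpa [hu] using hgN ⟨u, hu⟩⟩
  simp only [mem_coe] at hx hy
  exact congrArg Subtype.val (hg (by simpa [hx, hy] using hxy))

lemma pair_inter_pair_eq_empty {α : Type*} {a b c d : α} :
    ({a, b} ∩ {c, d} : Set α) = ∅ ↔ a ≠ c ∧ a ≠ d ∧ b ≠ c ∧ b ≠ d := by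
  simp only [Set.eq_empty_iff_forall_notMem, Set.mem_inter_iff, Set.mem_insert_iff,
    Set.mem_singleton_iff]
  aesop

lemma isConnected_biUnion_segment_insert {E : Type*} [NormedAddCommGroup E] [NormedSpace ℝ E]
    [DecidableEq E] {a b : E} {F : Finset (E × E)}
    (hF : ∀ s ∈ F, (segment ℝ s.1 s.2 ∩ segment ℝ a b).Nonempty) :
    IsConnected (⋃ s ∈ insert (a, b) F, segment ℝ s.1 s.2) := by
  have hmeet : ∀ s ∈ insert (a, b) F, (segment ℝ s.1 s.2 ∩ segment ℝ a b).Nonempty := by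
    rw [forall_mem_insert]
    exact ⟨⟨a, left_mem_segment ℝ a b, left_mem_segment ℝ a b⟩, hF⟩
  exact IsConnected.biUnion_of_reflTransGen (t := ↑(insert (a, b) F))
    ⟨(a, b), mem_insert_self _ _⟩
    (fun s _ => (convex_segment s.1 s.2).isConnected ⟨s.1, left_mem_segment ℝ s.1 s.2⟩)
    (fun s hs s' hs' => (Relation.ReflTransGen.single ⟨hmeet s hs, hs⟩).tail
      ⟨Set.inter_comm _ _ ▸ hmeet s' hs', mem_insert_self _ _⟩)

lemma endpoints_inter_eq_empty_of_mem_insert_image {α : Type*} [DecidableEq α] {a b : α}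
    {T R : Finset α} {f : α → α} (hf : Set.InjOn f T) (hfR : ∀ u ∈ T, f u ∈ R)
    (hTR : Disjoint T R) (ha : a ∉ T ∪ R) (hb : b ∉ T ∪ R) :
    ∀ s ∈ insert (a, b) (T.image fun u => (u, f u)),
      ∀ t ∈ insert (a, b) (T.image fun u => (u, f u)), s ≠ t →
        ({s.1, s.2} : Set α) ∩ {t.1, t.2} = ∅ := by
  have hne : ∀ u ∈ T, a ≠ u ∧ a ≠ f u ∧ b ≠ u ∧ b ≠ f u := fun u hu =>
    ⟨fun h => ha (mem_union_left _ (h ▸ hu)), fun h => ha (mem_union_right _ (h ▸ hfR u hu)),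
      fun h => hb (mem_union_left _ (h ▸ hu)), fun h => hb (mem_union_right _ (h ▸ hfR u hu))⟩
  have hTR' : ∀ u ∈ T, ∀ w ∈ T, u ≠ f w := fun u hu w hw h =>
    disjoint_left.1 hTR hu (h ▸ hfR w hw)
  simp only [mem_insert, mem_image, pair_inter_pair_eq_empty]
  rintro s (rfl | ⟨u, hu, rfl⟩) t (rfl | ⟨w, hw, rfl⟩) hst
  · exact absurd rfl hst
  · exact hne w hw
  · obtain ⟨h1, h2, h3, h4⟩ := hne u hu
    exact ⟨h1.symm, h3.symm, h2.symm, h4.symm⟩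
  · have huw : u ≠ w := fun h => hst (h ▸ rfl)
    exact ⟨huw, hTR' u hu w hw, (hTR' w hw u hu).symm, fun h => huw (hf hu hw h)⟩

noncomputable def leftOf (P : Finset (ℝ × ℝ)) (p b : ℝ × ℝ) : Finset (ℝ × ℝ) :=
  {q ∈ P | 0 < cross (b - p) (q - p)}

noncomputable def rightOf (P : Finset (ℝ × ℝ)) (p b : ℝ × ℝ) : Finset (ℝ × ℝ) :=
  {q ∈ P | cross (b - p) (q - p) < 0}

section Configuration

variable {P : Finset (ℝ × ℝ)} {p b : ℝ × ℝ}

lemma disjoint_leftOf_rightOf : Disjoint (leftOf P p b) (rightOf P p b) :=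
  disjoint_filter.2 fun _ _ h h' => (h.trans h').false

lemma notMem_leftOf_union_rightOf {x : ℝ × ℝ} (hx : cross (b - p) (x - p) = 0) :
    x ∉ leftOf P p b ∪ rightOf P p b := by
  simp [leftOf, rightOf, hx]

/-- For `u` left of `pb`, the open half-plane beyond the line `pu` on the side of `b` contains
only `b`, points left of `pb` angularly beyond `u`, and points right of `pb`. -/
lemma card_filter_cross_pos_le
    (hgen : ∀ x ∈ P, ∀ y ∈ P, ∀ z ∈ P,
      x ≠ y → x ≠ z → y ≠ z → ¬ Collinear ℝ ({x, y, z} : Set (ℝ × ℝ)))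
    (hp : p ∈ P) (hbP : b ∈ P) (hbp : b ≠ p) {u : ℝ × ℝ} (hu : 0 < cross (b - p) (u - p)) :
    #{q ∈ P | 0 < cross (p - u) (q - p)} ≤
      #{w ∈ leftOf P p b | cotAngle (b - p) (u - p) < cotAngle (b - p) (w - p)} +
        #{v ∈ rightOf P p b | 0 < cross (v - p) (u - p)} + 1 := by
  have hsub : {q ∈ P | 0 < cross (p - u) (q - p)} ⊆ insert b
      ({w ∈ leftOf P p b | cotAngle (b - p) (u - p) < cotAngle (b - p) (w - p)} ∪
        {v ∈ rightOf P p b | 0 < cross (v - p) (u - p)}) := by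
    intro q hq
    obtain ⟨hqP, hq⟩ := mem_filter.1 hq
    rw [show cross (p - u) (q - p) = cross (q - p) (u - p) by unfold cross; simp; ring] at hq
    rcases eq_or_ne q b with rfl | hqb
    · exact mem_insert_self _ _
    have hqp : q ≠ p := by
      rintro rfl
      simp [cross] at hq
    refine mem_insert_of_mem ?_
    rcases (cross_sub_ne_zero hgen hp hbP hqP hbp hqp hqb.symm).lt_or_gt with hneg | hpos
    · exact mem_union_right _ (mem_filter.2 ⟨mem_filter.2 ⟨hqP, hneg⟩, hq⟩)
    · refine mem_union_left _ (mem_filter.2 ⟨mem_filter.2 ⟨hqP, hpos⟩, ?_⟩)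
      exact (cotAngle_lt_cotAngle_iff (sub_ne_zero.2 hbp) hu hpos).2 hq
  calc _ ≤ _ := card_le_card hsub
    _ ≤ _ := card_insert_le _ _
    _ ≤ _ := Nat.add_le_add_right (card_union_le _ _) 1

theorem exists_crossing_matching {d : ℕ}
    (hgen : ∀ x ∈ P, ∀ y ∈ P, ∀ z ∈ P,
      x ≠ y → x ≠ z → y ≠ z → ¬ Collinear ℝ ({x, y, z} : Set (ℝ × ℝ)))
    (hp : p ∈ P)
    (hd : ∀ S ⊆ P.erase p, p ∈ frontier (convexHull ℝ (↑(P \ S) : Set (ℝ × ℝ))) → d ≤ S.card)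
    (hb : b ∈ P.erase p) (hbmax : ∀ q ∈ P.erase p, dot (q - p) (q - p) ≤ dot (b - p) (b - p)) :
    ∃ T ⊆ leftOf P p b, #T = d - 1 ∧ ∃ f : ℝ × ℝ → ℝ × ℝ, Set.InjOn f T ∧
      ∀ u ∈ T, f u ∈ rightOf P p b ∧ (segment ℝ u (f u) ∩ segment ℝ p b).Nonempty := by
  obtain ⟨hbp, hbP⟩ := mem_erase.1 hb
  have hne {x : ℝ × ℝ} (hx : 0 ≠ cross (b - p) (x - p)) : x ≠ p := by
    rintro rfl
    simp [cross_zero_right] at hx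
  obtain ⟨T, hTL, hT, f, hf, hfN⟩ := exists_subset_injOn_of_le_card_add_card
    (fun u => cotAngle (b - p) (u - p)) (fun u => {v ∈ rightOf P p b | 0 < cross (v - p) (u - p)})
    (L := leftOf P p b) (k := d - 1)
    (by have := le_card_filter_cross_pos hp hd (sub_ne_zero.2 hbp); unfold leftOf; omega)
    (fun u hu => by
      obtain ⟨-, hu⟩ := mem_filter.1 hu
      have := le_card_filter_cross_pos hp hd (sub_ne_zero.2 (hne hu.ne).symm)
      have := card_filter_cross_pos_le hgen hp hbP hbp hu
      omega)
  refine ⟨T, hTL, hT, f, hf, fun u hu => ?_⟩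
  obtain ⟨hfu, hcross⟩ := mem_filter.1 (hfN u hu)
  obtain ⟨huP, hu⟩ := mem_filter.1 (hTL hu)
  obtain ⟨hfuP, hfu'⟩ := mem_filter.1 hfu
  exact ⟨hfu, segment_inter_segment_nonempty hu hfu' hcross
    (hbmax u (mem_erase.2 ⟨hne hu.ne, huP⟩)) (hbmax (f u) (mem_erase.2 ⟨hne hfu'.ne', hfuP⟩))⟩

end Configuration

end PlaneMatching

open PlaneMatching Finset

theorem stmt_13_general (P : Finset (ℝ × ℝ)) (p : ℝ × ℝ) (hp : p ∈ P)
    (hgen : ∀ x ∈ P, ∀ y ∈ P, ∀ z ∈ P,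
            x ≠ y → x ≠ z → y ≠ z → ¬ Collinear ℝ ({x, y, z} : Set (ℝ × ℝ)))
    (d : ℕ) (hd : 1 ≤ d)
    (hd₂ : ∀ S ⊆ P.erase p,
           p ∈ frontier (convexHull ℝ (↑(P \ S) : Set (ℝ × ℝ))) → d ≤ S.card) :
    ∃ M : Finset ((ℝ × ℝ) × (ℝ × ℝ)), M.card = d ∧
      (∀ s ∈ M, s.1 ∈ P ∧ s.2 ∈ P ∧ s.1 ≠ s.2) ∧
      (∀ s ∈ M, ∀ t ∈ M, s ≠ t →
        ({s.1, s.2} : Set (ℝ × ℝ)) ∩ ({t.1, t.2} : Set (ℝ × ℝ)) = ∅) ∧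
      IsConnected (⋃ s ∈ M, segment ℝ s.1 s.2) := by
  obtain ⟨b, hb, hbmax⟩ := (P.erase p).exists_max_image (fun q => dot (q - p) (q - p))
    (card_pos.1 (hd.trans (le_card_erase hp hd₂)))
  obtain ⟨hbp, hbP⟩ := mem_erase.1 hb
  obtain ⟨T, hTL, hT, f, hf, hfR⟩ := exists_crossing_matching hgen hp hd₂ hb hbmax
  have hp_off : p ∉ leftOf P p b ∪ rightOf P p b :=
    notMem_leftOf_union_rightOf (by simp [cross_zero_right])
  have hb_off : b ∉ leftOf P p b ∪ rightOf P p b := notMem_leftOf_union_rightOf (cross_self _)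
  have hpb : (p, b) ∉ T.image fun u => (u, f u) := fun h => by
    obtain ⟨u, hu, hup⟩ := mem_image.1 h
    exact hp_off (mem_union_left _ ((Prod.mk.inj hup).1 ▸ hTL hu))
  refine ⟨insert (p, b) (T.image fun u => (u, f u)), ?_, ?_,
    endpoints_inter_eq_empty_of_mem_insert_image hf (fun u hu => (hfR u hu).1)
      (disjoint_leftOf_rightOf.mono_left hTL) (fun h => hp_off (union_subset_union hTL le_rfl h))
      (fun h => hb_off (union_subset_union hTL le_rfl h)),
    isConnected_biUnion_segment_insert (forall_mem_image.2 fun u hu => (hfR u hu).2)⟩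
  · rw [card_insert_of_notMem hpb, card_image_of_injective _ (fun x y h => congrArg Prod.fst h)]
    omega
  · simp only [forall_mem_insert, forall_mem_image]
    refine ⟨⟨hp, hbP, hbp.symm⟩, fun u hu => ⟨(mem_filter.1 (hTL hu)).1,
      (mem_filter.1 (hfR u hu).1).1, ?_⟩⟩
    exact fun h => disjoint_left.1 disjoint_leftOf_rightOf (hTL hu) (h ▸ (hfR u hu).1)

theorem stmt_13 (P : Finset (ℝ × ℝ)) (p : ℝ × ℝ) (hp : p ∈ P)
    (hgen : ∀ x ∈ P, ∀ y ∈ P, ∀ z ∈ P,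
            x ≠ y → x ≠ z → y ≠ z → ¬ Collinear ℝ ({x, y, z} : Set (ℝ × ℝ)))
    (d : ℕ) (hd : 1 ≤ d)
    (hd₁ : ∃ S ⊆ P.erase p, S.card = d ∧
           p ∈ frontier (convexHull ℝ (↑(P \ S) : Set (ℝ × ℝ))))
    (hd₂ : ∀ S ⊆ P.erase p,
           p ∈ frontier (convexHull ℝ (↑(P \ S) : Set (ℝ × ℝ))) → d ≤ S.card) :
    ∃ M : Finset ((ℝ × ℝ) × (ℝ × ℝ)), M.card = d ∧
      (∀ s ∈ M, s.1 ∈ P ∧ s.2 ∈ P ∧ s.1 ≠ s.2) ∧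
      (∀ s ∈ M, ∀ t ∈ M, s ≠ t →
        ({s.1, s.2} : Set (ℝ × ℝ)) ∩ ({t.1, t.2} : Set (ℝ × ℝ)) = ∅) ∧
      IsConnected (⋃ s ∈ M, segment ℝ s.1 s.2) :=
  stmt_13_general P p hp hgen d hd hd₂
end
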